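/- For t₁ < t₂, let α(t₁,t₂) = arg(R'(t₁)/(R(t₂)−R(t₁))) where R(t) = sin t + i·ξ(t), ξ(t) = ∫₀ᵗ sin²/√(1+sin²). Then the partial derivative of α with respect to t₁ equals |R'(t₁)|·(sin α / l + κ(t₁)), where l = |R(t₂) − R(t₁)| and κ(t) = 2 sin t. -/

import Mathlib

/-! Where `R'(s) / (R t₂ - R s)` lies off the slit `(-∞, 0]`, `arg = Im ∘ log` is smooth there and
the logarithmic derivative gives `α' = Im (R''/R') + Im (R'/(R t₂ - R t₁))`. The second term is
`‖R'‖ sin α / l`; the first is `‖R'‖ κ` for the signed curvature `κ` of `R`, which a direct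
computation shows to be `2 sin t`. The quotient avoids the slit because `R'` points into the closed
upper half plane and the chord into the open one: `ξ` is strictly increasing, its integrand being
nonnegative and vanishing only at the zeros of `sin`. -/

open Real Complex

noncomputable def xi (t : ℝ) : ℝ :=
  ∫ τ in (0:ℝ)..t, Real.sin τ ^ 2 / Real.sqrt (1 + Real.sin τ ^ 2)

noncomputable def R (t : ℝ) : ℂ := (Real.sin t : ℂ) + Complex.I * (xi t : ℂ)

/-- Initial chord angle of `R` on `[t₁, t₂]`. -/
noncomputable def alphaAng (t₁ t₂ : ℝ) : ℝ := Complex.arg (deriv R t₁ / (R t₂ - R t₁))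

noncomputable def xi' (t : ℝ) : ℝ := Real.sin t ^ 2 / Real.sqrt (1 + Real.sin t ^ 2)

noncomputable def xi'' (t : ℝ) : ℝ :=
  Real.sin t * Real.cos t * (2 + Real.sin t ^ 2) /
    ((1 + Real.sin t ^ 2) * Real.sqrt (1 + Real.sin t ^ 2))

noncomputable def R' (t : ℝ) : ℂ := (Real.cos t : ℂ) + Complex.I * (xi' t : ℂ)

noncomputable def R'' (t : ℝ) : ℂ := (-Real.sin t : ℂ) + Complex.I * (xi'' t : ℂ)

theorem HasDerivAt.arg {f : ℝ → ℂ} {f' : ℂ} {t : ℝ} (hf : HasDerivAt f f' t)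
    (h : f t ∈ slitPlane) : HasDerivAt (fun s => Complex.arg (f s)) (f' / f t).im t := by
  simpa only [Function.comp_def, imCLM_apply, log_im] using
    imCLM.hasFDerivAt.comp_hasDerivAt t (hf.clog_real h)

theorem HasDerivAt.arg_div {f g : ℝ → ℂ} {f' g' : ℂ} {t : ℝ} (hf : HasDerivAt f f' t)
    (hg : HasDerivAt g g' t) (hf₀ : f t ≠ 0) (hg₀ : g t ≠ 0) (h : f t / g t ∈ slitPlane) :
    HasDerivAt (fun s => Complex.arg (f s / g s)) (f' / f t - g' / g t).im t := by
  refine ((hf.fun_div hg hg₀).arg h).congr_deriv ?_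
  field_simp

theorem Complex.div_mem_slitPlane {a b : ℂ} (ha : a ≠ 0) (ha_im : 0 ≤ a.im) (hb_im : 0 < b.im) :
    a / b ∈ slitPlane := by
  have hb : b ≠ 0 := fun h => by simp [h] at hb_im
  rw [mem_slitPlane_iff, or_iff_not_imp_right, not_not]
  intro him
  have ha_eq : (a / b).re * b.im = a.im := by
    simpa [him] using congrArg Complex.im (div_mul_cancel₀ a hb)
  have hre : (a / b).re ≠ 0 := fun h0 => div_ne_zero ha hb (Complex.ext h0 him)
  exact lt_of_le_of_ne (nonneg_of_mul_nonneg_left (ha_eq.symm ▸ ha_im) hb_im) hre.symm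

theorem Complex.im_div_eq_norm_mul_sin_arg_div (a b : ℂ) :
    (a / b).im = ‖a‖ * (Real.sin (arg (a / b)) / ‖b‖) := by
  rw [sin_arg, norm_div]
  rcases eq_or_ne a 0 with rfl | ha
  · simp
  rcases eq_or_ne b 0 with rfl | hb
  · simp
  field_simp

theorem exists_sin_ne_zero_of_lt {a b : ℝ} (hab : a < b) : ∃ c ∈ Set.Icc a b, Real.sin c ≠ 0 := by
  by_contra! h
  have hm : (a + b) / 2 ∈ Set.Ioo a b := ⟨by linarith, by linarith⟩
  have hsin : Real.sin =ᶠ[nhds ((a + b) / 2)] fun _ => 0 :=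
    Filter.eventually_of_mem (Ioo_mem_nhds hm.1 hm.2) fun x hx => h x (Set.Ioo_subset_Icc_self hx)
  have hcos : Real.cos ((a + b) / 2) = 0 := by simpa using hsin.deriv_eq
  nlinarith [Real.sin_sq_add_cos_sq ((a + b) / 2), h _ (Set.Ioo_subset_Icc_self hm)]

lemma xi'_nonneg (t : ℝ) : 0 ≤ xi' t := by unfold xi'; positivity

lemma continuous_xi' : Continuous xi' := by
  unfold xi'
  fun_prop (disch := intro t; positivity)

lemma hasDerivAt_xi (t : ℝ) : HasDerivAt xi (xi' t) t := by
  exact intervalIntegral.integral_hasDerivAt_right (continuous_xi'.intervalIntegrable _ _)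
    (continuous_xi'.stronglyMeasurableAtFilter _ _) continuous_xi'.continuousAt

lemma hasDerivAt_xi' (t : ℝ) : HasDerivAt xi' (xi'' t) t := by
  have hsq : HasDerivAt (fun t => Real.sin t ^ 2) (2 * Real.sin t * Real.cos t) t := by
    simpa using (Real.hasDerivAt_sin t).fun_pow 2
  have hroot := (hsq.const_add 1).sqrt (by positivity)
  refine (hsq.fun_div hroot (by positivity)).congr_deriv ?_
  have hsq_sqrt := Real.sq_sqrt (by positivity : (0 : ℝ) ≤ 1 + Real.sin t ^ 2)
  unfold xi''
  field_simp
  linear_combination (Real.sin t ^ 3 * Real.cos t) * hsq_sqrt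

lemma strictMono_xi : StrictMono xi := by
  intro a b hab
  obtain ⟨c, hc, hsin⟩ := exists_sin_ne_zero_of_lt hab
  have hpos : 0 < ∫ τ in a..b, xi' τ :=
    intervalIntegral.integral_pos hab continuous_xi'.continuousOn (fun x _ => xi'_nonneg x)
      ⟨c, hc, by unfold xi'; positivity⟩
  have hdiff : ∫ τ in a..b, xi' τ = xi b - xi a :=
    intervalIntegral.integral_eq_sub_of_hasDerivAt (fun x _ => hasDerivAt_xi x)
      (continuous_xi'.intervalIntegrable _ _)
  linarith

lemma hasDerivAt_R (t : ℝ) : HasDerivAt R (R' t) t :=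
  (Real.hasDerivAt_sin t).ofReal_comp.add (((hasDerivAt_xi t).ofReal_comp).const_mul I)

lemma deriv_R : deriv R = R' := funext fun t => (hasDerivAt_R t).deriv

lemma hasDerivAt_R' (t : ℝ) : HasDerivAt R' (R'' t) t := by
  refine ((Real.hasDerivAt_cos t).ofReal_comp.add
    (((hasDerivAt_xi' t).ofReal_comp).const_mul I)).congr_deriv ?_
  simp [R'']

lemma R'_re (t : ℝ) : (R' t).re = Real.cos t := by simp [R', -ofReal_cos]
lemma R'_im (t : ℝ) : (R' t).im = xi' t := by simp [R', -ofReal_cos]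
lemma R''_re (t : ℝ) : (R'' t).re = -Real.sin t := by simp [R'', -ofReal_sin]
lemma R''_im (t : ℝ) : (R'' t).im = xi'' t := by simp [R'', -ofReal_sin]

lemma normSq_R' (t : ℝ) : normSq (R' t) = 1 / (1 + Real.sin t ^ 2) := by
  have hsq_sqrt := Real.sq_sqrt (by positivity : (0 : ℝ) ≤ 1 + Real.sin t ^ 2)
  rw [normSq_apply, R'_re, R'_im, xi']
  field_simp
  rw [hsq_sqrt]
  linear_combination (1 + Real.sin t ^ 2) ^ 2 * Real.sin_sq_add_cos_sq t

lemma norm_R' (t : ℝ) : ‖R' t‖ = 1 / Real.sqrt (1 + Real.sin t ^ 2) := by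
  rw [norm_def, normSq_R', one_div, Real.sqrt_inv, one_div]

lemma R'_ne_zero (t : ℝ) : R' t ≠ 0 :=
  normSq_pos.1 (by rw [normSq_R']; positivity)

lemma im_R''_div_R' (t : ℝ) : (R'' t / R' t).im = ‖R' t‖ * (2 * Real.sin t) := by
  rw [div_im, normSq_R', R''_im, R''_re, R'_re, R'_im, xi', xi'', norm_R']
  field_simp
  linear_combination (Real.sin t * (2 + Real.sin t ^ 2)) * Real.sin_sq_add_cos_sq t

theorem alpha_partial_t1 (t₁ t₂ : ℝ) (h : t₁ < t₂) :
    deriv (fun s => alphaAng s t₂) t₁ =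
      ‖deriv R t₁‖ *
        (Real.sin (alphaAng t₁ t₂) / ‖R t₂ - R t₁‖ + 2 * Real.sin t₁) := by
  have hchord_im : 0 < (R t₂ - R t₁).im := by
    simpa [R] using strictMono_xi h
  have hchord : R t₂ - R t₁ ≠ 0 := fun h0 => by simp [h0] at hchord_im
  have hslit : R' t₁ / (R t₂ - R t₁) ∈ slitPlane :=
    div_mem_slitPlane (R'_ne_zero t₁) (R'_im t₁ ▸ xi'_nonneg t₁) hchord_im
  have hα := (hasDerivAt_R' t₁).arg_div ((hasDerivAt_R t₁).const_sub (R t₂))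
    (R'_ne_zero t₁) hchord hslit
  simp only [alphaAng, deriv_R] at hα ⊢
  rw [hα.deriv, neg_div, sub_neg_eq_add, add_im, im_R''_div_R',
    im_div_eq_norm_mul_sin_arg_div]
  ring
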